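/- arXiv:1007.5020 — 4 statements merged into one kernel-verified Lean document; each statement's English description precedes it below -/
import Mathlib

section
/- On the standard CR sphere S³, the smallest nonzero eigenvalue of the Kohn Laplacian □_b equals 2, which equals the (constant) Webster curvature; hence the lower bound λ ≥ min R for nonzero eigenvalues of □_b is sharp. -/
/-- On the standard CR sphere `S³` the Kohn Laplacian `□_b` acts on `H_{p,q}`
by `2(p+1)q`, so its nonzero eigenvalues are `{2(p+1)q : q ≥ 1, p ≥ 0}`.  The smallest
nonzero eigenvalue is `2`, which equals the constant Webster curvature `R ≡ 2`; hence the
lower bound `λ ≥ min R` is sharp. -/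
theorem sphere_smallest_nonzero_kohn_eigenvalue :
    IsLeast {x : ℝ | ∃ p q : ℕ, 1 ≤ q ∧ x = 2 * (p + 1) * q} 2 ∧
    (2 : ℝ) = 2 := by
  refine ⟨⟨⟨0, 1, le_refl 1, by norm_num⟩, ?_⟩, rfl⟩
  rintro x ⟨p, q, hq, rfl⟩
  have hq' : (1 : ℝ) ≤ q := by exact_mod_cast hq
  nlinarith [Nat.cast_nonneg (α := ℝ) p]
end

section
/- Let u, v be smooth functions on the standard CR sphere S³ with u_{1̄} = 0 (u is CR) and v₁ = 0 (v is anti-CR), and let φ ∈ C^∞(S³). Then with D = φZ₁Z₁ + φ̄Z_{1̄}Z_{1̄} + φ₁Z₁ + φ̄_{1̄}Z_{1̄}, one has ⟨D²(u+v), u+v⟩ = ∫_{S³} |(φu_{11} + φ₁u₁) + (φ̄v_{1̄1̄} + φ̄_{1̄}v_{1̄})|² ≥ 0. In particular ⟨D²f, f⟩ ≥ 0 for every f in the kernel of the Paneitz operator on S³. -/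
/-- Model the smooth functions on the standard CR sphere `S³` as a commutative
`ℂ`-star-algebra `A` with derivation `Z₁` (conjugate derivation `Z_{1̄} = star ∘ Z₁ ∘ star`)
and integral `∫ · θ∧dθ` satisfying the divergence formula.  If `u` is CR (`Z_{1̄}u = 0`) and
`v` is anti-CR (`Z₁v = 0`) then, with
`D = φZ₁Z₁ + φ̄Z_{1̄}Z_{1̄} + φ₁Z₁ + φ̄_{1̄}Z_{1̄}`,
`⟨D²(u+v), u+v⟩ = ∫ |(φu₁₁ + φ₁u₁) + (φ̄v_{1̄1̄} + φ̄_{1̄}v_{1̄})|² ≥ 0`.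
Since every element of the kernel of the Paneitz operator on `S³` is such a sum `u + v`,
this gives `⟨D²f, f⟩ ≥ 0` for all `f ∈ ker P₀`. -/
theorem Dsquared_nonneg_on_pluriharmonic
    (A : Type*) [CommRing A] [Algebra ℂ A] [StarRing A] [StarModule ℂ A]
    (Z1 Zb : A →ₗ[ℂ] A) (intg : A →ₗ[ℂ] ℂ)
    (hZb : ∀ a, Zb a = star (Z1 (star a)))
    (hLeib : ∀ a b : A, Z1 (a * b) = Z1 a * b + a * Z1 b)
    (hdiv : ∀ a, intg (Z1 a) = 0)
    (hdivb : ∀ a, intg (Zb a) = 0)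
    (hstar : ∀ a, intg (star a) = star (intg a))
    (hpos : ∀ a, 0 ≤ (intg (a * star a)).re)
    (φ u v : A) (hu : Zb u = 0) (hv : Z1 v = 0) :
    let D : A → A := fun a =>
      φ * Z1 (Z1 a) + star φ * Zb (Zb a) + Z1 φ * Z1 a + Zb (star φ) * Zb a
    let w : A := (φ * Z1 (Z1 u) + Z1 φ * Z1 u) + (star φ * Zb (Zb v) + Zb (star φ) * Zb v)
    intg (D (D (u + v)) * star (u + v)) = intg (w * star w) ∧
      0 ≤ (intg (D (D (u + v)) * star (u + v))).re := by
  intro D w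
  have hZbL : ∀ a b : A, Zb (a * b) = Zb a * b + a * Zb b := by
    intro a b
    rw [hZb, star_mul', hLeib, star_add, star_mul', star_mul', star_star, star_star,
      ← hZb, ← hZb]
  have ibp : ∀ a b : A, intg (Z1 a * b) = - intg (a * Z1 b) := by
    intro a b
    have h := hdiv (a * b)
    rw [hLeib, map_add] at h
    exact eq_neg_of_add_eq_zero_left h
  have ibpb : ∀ a b : A, intg (Zb a * b) = - intg (a * Zb b) := by
    intro a b
    have h := hdivb (a * b)
    rw [hZbL, map_add] at h
    exact eq_neg_of_add_eq_zero_left h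
  have hZbstar : ∀ a, Zb (star a) = star (Z1 a) := by
    intro a; rw [hZb, star_star]
  have hZ1star : ∀ a, Z1 (star a) = star (Zb a) := by
    intro a; rw [hZb, star_star]
  have hu2 : Zb (Zb u) = 0 := by rw [hu, map_zero]
  have hv2 : Z1 (Z1 v) = 0 := by rw [hv, map_zero]
  have hsu : Z1 (star u) = 0 := by rw [hZ1star, hu, star_zero]
  have hsv : Zb (star v) = 0 := by rw [hZbstar, hv, star_zero]
  have hDuv : D (u + v) = w := by
    simp only [D, w, map_add, hu, hv, hu2, hv2, map_zero]
    ring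
  have hw : w = Z1 (φ * Z1 u) + Zb (star φ * Zb v) := by
    simp only [w, hLeib, hZbL]; ring
  have hDw : D w = Z1 (φ * Z1 w) + Zb (star φ * Zb w) := by
    simp only [D, hLeib, hZbL]; ring
  have hsuv : star (u + v) = star u + star v := by rw [star_add]
  have key : intg (D (D (u + v)) * star (u + v)) = intg (w * star w) := by
    rw [hDuv, hDw, hsuv]
    have hZ1s : Z1 (star u + star v) = star (Zb v) := by
      rw [map_add, hsu, hZ1star, zero_add]
    have hZbs : Zb (star u + star v) = star (Z1 u) := by
      rw [map_add, hsv, hZbstar, add_zero]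
    have lhs1 : intg ((Z1 (φ * Z1 w) + Zb (star φ * Zb w)) * (star u + star v))
        = - intg (φ * Z1 w * star (Zb v)) - intg (star φ * Zb w * star (Z1 u)) := by
      rw [add_mul, map_add, ibp, ibpb, hZ1s, hZbs]
      ring
    have hstarw : star w = Zb (star φ * star (Z1 u)) + Z1 (φ * star (Zb v)) := by
      rw [hw, star_add, ← hZbstar, ← hZ1star, star_mul', star_mul', star_star]
    have rhs1 : intg (w * star w)
        = - intg (φ * Z1 w * star (Zb v)) - intg (star φ * Zb w * star (Z1 u)) := by
      rw [hstarw, mul_add, map_add]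
      rw [show w * Zb (star φ * star (Z1 u)) = Zb (star φ * star (Z1 u)) * w from mul_comm _ _]
      rw [show w * Z1 (φ * star (Zb v)) = Z1 (φ * star (Zb v)) * w from mul_comm _ _]
      rw [ibpb, ibp]
      rw [show star φ * star (Z1 u) * Zb w = star φ * Zb w * star (Z1 u) from by ring]
      rw [show φ * star (Zb v) * Z1 w = φ * Z1 w * star (Zb v) from by ring]
      ring
    rw [lhs1, rhs1]
  exact ⟨key, key ▸ hpos w⟩
end

section
/- First variation vanishing: for any φ ∈ C^∞(S³), any f ∈ H_{p,0} (p ≥ 0) and any g with g_{1̄} = 0, one has ⟨Ṗ₀^t|_{t=0} f, g⟩ = 0, where 4Ṗ₀^t|_{t=0} = −2D□̄_b − 2□_b D + 4(EZ₁Z₁ + E₁Z₁), D = φZ₁Z₁ + φ̄Z_{1̄}Z_{1̄} + φ₁Z₁ + φ̄_{1̄}Z_{1̄}, E = 4φ + iφ₀. -/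
/-- first variation vanishing.  Model the smooth functions on the standard CR
sphere `S³` as a commutative `ℂ`-star-algebra `A` with derivation `Z₁`, conjugate derivation
`Z_{1̄} = star ∘ Z₁ ∘ star`, and integral satisfying the divergence formulas.  On `S³` the
connection coefficients vanish on the standard frame, so `□_b = −2Z₁Z_{1̄}`,
`□̄_b = −2Z_{1̄}Z₁`, and `iφ₀ = Z_{1̄}Z₁φ − Z₁Z_{1̄}φ`, whence
`E = 4φ + iφ₀ = 4φ + Z_{1̄}Z₁φ − Z₁Z_{1̄}φ`.  For any `φ ∈ C^∞(S³)`, any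
`f ∈ H_{p,0}` (so `f_{1̄} = 0` and `□̄_b f = 2p f`) and any CR-holomorphic `g`
(`g_{1̄} = 0`), one has `⟨Ṗ₀^t|_{t=0} f, g⟩ = 0`, where
`4Ṗ₀^t|_{t=0} = −2D□̄_b − 2□_b D + 4(EZ₁Z₁ + E₁Z₁)` and
`D = φZ₁Z₁ + φ̄Z_{1̄}Z_{1̄} + φ₁Z₁ + φ̄_{1̄}Z_{1̄}`. -/
theorem first_variation_paneitz_vanishes
    (A : Type*) [CommRing A] [Algebra ℂ A] [StarRing A] [StarModule ℂ A]
    (Z1 Zb : A →ₗ[ℂ] A) (intg : A →ₗ[ℂ] ℂ)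
    (hZb : ∀ a, Zb a = star (Z1 (star a)))
    (hLeib : ∀ a b : A, Z1 (a * b) = Z1 a * b + a * Z1 b)
    (hdiv : ∀ a, intg (Z1 a) = 0)
    (hdivb : ∀ a, intg (Zb a) = 0)
    (hstar : ∀ a, intg (star a) = star (intg a))
    (φ f g : A) (p : ℕ)
    (hf : Zb f = 0) (hg : Zb g = 0)
    (hfp : (-2 : ℂ) • Zb (Z1 f) = ((2 * p : ℕ) : ℂ) • f) :
    let D : A → A := fun a =>
      φ * Z1 (Z1 a) + star φ * Zb (Zb a) + Z1 φ * Z1 a + Zb (star φ) * Zb a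
    let E : A := (4 : ℂ) • φ + Zb (Z1 φ) - Z1 (Zb φ)
    let BoxBar : A → A := fun a => (-2 : ℂ) • Zb (Z1 a)
    let Box : A → A := fun a => (-2 : ℂ) • Z1 (Zb a)
    intg (((-2 : ℂ) • D (BoxBar f) + (-2 : ℂ) • Box (D f) +
        (4 : ℂ) • (E * Z1 (Z1 f) + Z1 E * Z1 f)) * star g) = 0 := by

  intro D E BoxBar Box
  simp only [D, E, BoxBar, Box]
  -- g is CR-holomorphic, so Z1 (star g) = 0
  have hg1 : Z1 (star g) = 0 := by
    have h := hZb g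
    rw [hg] at h
    have h2 := congrArg star h
    simpa using h2.symm
  -- integration by parts against star g
  have L : ∀ a : A, intg (Z1 a * star g) = 0 := by
    intro a
    have h := hdiv (a * star g)
    rw [hLeib, hg1, mul_zero, add_zero] at h
    exact h
  rw [hfp]
  have h1 : intg (Z1 (φ * Z1 f) * star g) = 0 := L _
  have h2 : intg (Z1 (Zb (φ * Z1 (Z1 f) + Z1 φ * Z1 f)) * star g) = 0 := L _
  have h3 : intg (Z1 (E * Z1 f) * star g) = 0 := L _
  rw [hLeib] at h1 h3
  simp only [E] at h3
  simp only [map_smul, map_add, hf, map_zero, smul_zero, mul_zero, add_zero, zero_add,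
    mul_smul_comm, smul_mul_assoc, add_mul, smul_add, smul_smul, smul_eq_mul] at h1 h2 h3 ⊢
  push_cast at *
  linear_combination (-4 * (p : ℂ)) * h1 + 4 * h2 + 4 * h3
end

section
/- For the deformed CR structure Z_{1̄}^φ = Z_{1̄} + φZ₁ on a pseudohermitian 3-manifold with fixed contact form, the deformed torsion coefficient is A^1{}_{1̄}^φ = A^1{}_{1̄} − F²(φ₀ + φθ₁¹(T) − φθ_{1̄}^{1̄}(T) + φ²A^{1̄}{}_1 − |φ|²A^1{}_{1̄}), where F = (1−|φ|²)^{-1/2}; the derivation rests on solving the linear system F A^φ = F A − B₃₂, −Fφ̄A^φ = −FφA^{1̄}{}_1 − B₃₁ combined with the constraint −Fφ₀ − φFθ₁¹(T) + φFθ_{1̄}^{1̄}(T) + φB₁₃ + B₂₃ = 0 and B₃₁ = B₁₃, B₃₂ = B₂₃. -/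
open ComplexConjugate

/-- the formula for the deformed torsion coefficient
`A^1{}_{1̄}^φ = A^1{}_{1̄} − F²(φ₀ + φθ₁¹(T) − φθ_{1̄}^{1̄}(T) + φ²A^{1̄}{}_1 − |φ|²A^1{}_{1̄})`
(with `F = (1−|φ|²)^{-1/2}`) follows, as a purely algebraic statement, from the linear
system coming from Cartan's lemma:
`F·A^φ = F·A^1{}_{1̄} − B₃₂`, `−Fφ̄·A^φ = −Fφ·A^{1̄}{}_1 − B₃₁`, the constraint
`−Fφ₀ − φFθ₁¹(T) + φFθ_{1̄}^{1̄}(T) + φB₁₃ + B₂₃ = 0`, and the symmetries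
`B₃₁ = B₁₃`, `B₃₂ = B₂₃`. -/
theorem deformed_torsion_formula
    (φ φ0 θ1T θbT A1b Ab1 Aφ B31 B32 B13 B23 : ℂ) (F : ℝ)
    (hφ : ‖φ‖ < 1)
    (hF : F = ((1 - ‖φ‖ ^ 2 : ℝ)) ^ (-(1 / 2 : ℝ)))
    (h1 : (F : ℂ) * Aφ = (F : ℂ) * A1b - B32)
    (h2 : -(F : ℂ) * conj φ * Aφ = -(F : ℂ) * φ * Ab1 - B31)
    (h3 : -(F : ℂ) * φ0 - φ * (F : ℂ) * θ1T + φ * (F : ℂ) * θbT + φ * B13 + B23 = 0)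
    (hB31 : B31 = B13) (hB32 : B32 = B23) :
    Aφ = A1b - (F : ℂ) ^ 2 *
      (φ0 + φ * θ1T - φ * θbT + φ ^ 2 * Ab1 - ((‖φ‖ ^ 2 : ℝ) : ℂ) * A1b) := by
  set c : ℂ := ((‖φ‖ ^ 2 : ℝ) : ℂ) with hc
  have hpos : (0 : ℝ) < 1 - ‖φ‖ ^ 2 := by
    nlinarith [norm_nonneg φ]
  have hF2 : F ^ 2 = (1 - ‖φ‖ ^ 2)⁻¹ := by
    rw [hF, ← Real.rpow_natCast _ 2, ← Real.rpow_mul hpos.le]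
    norm_num [Real.rpow_neg_one]
  have hF2' : F ^ 2 * (1 - ‖φ‖ ^ 2) = 1 := by
    rw [hF2]; field_simp
  have hFC : (F : ℂ) ^ 2 * (1 - c) = 1 := by
    rw [hc]; exact_mod_cast congrArg Complex.ofReal hF2'
  have hFpos : (0 : ℝ) < F := hF ▸ Real.rpow_pos_of_pos hpos _
  have hFne : (F : ℂ) ≠ 0 := by exact_mod_cast hFpos.ne'
  have hconj : φ * conj φ = c := by
    rw [Complex.mul_conj, hc]
    norm_cast
    exact (Complex.sq_norm φ).symm
  have heq : (F : ℂ) * ((1 - c) * Aφ -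
      (A1b - φ0 - φ * θ1T + φ * θbT - φ ^ 2 * Ab1)) = 0 := by
    linear_combination -h3 + h1 + φ * h2 + (F : ℂ) * Aφ * hconj - hB32 - φ * hB31
  have heqX : (1 - c) * Aφ = A1b - φ0 - φ * θ1T + φ * θbT - φ ^ 2 * Ab1 := by
    rcases mul_eq_zero.mp heq with h | h
    · exact absurd h hFne
    · linear_combination h
  linear_combination (F : ℂ) ^ 2 * heqX + (A1b - Aφ) * hFC
end
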